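/- arXiv:1012.2239 — 3 statements merged into one kernel-verified Lean document; each statement's English description precedes it below -/
import Mathlib

section
/- Let D₁ be a bounded self-adjoint operator on a complex Hilbert space H with ⟨D₁x, x⟩ ≥ β‖x‖² for all x, where β > 0, and let k ∈ (0, β). On H × H, the sesquilinear form [x, y] = ⟨x₂, y₂⟩ + k⟨D₁x₂, y₂⟩ − k²⟨x₂, y₂⟩ + ⟨x₁ + k x₂, y₁ + k y₂⟩ (writing x = (x₁,x₂), y = (y₁,y₂)) satisfies [x, x] ≥ ‖x₂‖² + (1 − k/β)‖x₁‖² for all x. -/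
open scoped InnerProductSpace

theorem modified_form_lower_bound {H : Type*} [NormedAddCommGroup H]
    [InnerProductSpace ℂ H] [CompleteSpace H] (D₁ : H →L[ℂ] H) (hsa : IsSelfAdjoint D₁)
    (β : ℝ) (hβ : 0 < β) (hD₁ : ∀ x : H, β * ‖x‖ ^ 2 ≤ (⟪x, D₁ x⟫_ℂ).re)
    (k : ℝ) (hk : k ∈ Set.Ioo 0 β) :
    ∀ x₁ x₂ : H,
      ‖x₂‖ ^ 2 + (1 - k / β) * ‖x₁‖ ^ 2 ≤
        (⟪x₂, x₂⟫_ℂ + (k : ℂ) * ⟪x₂, D₁ x₂⟫_ℂ - (k : ℂ) ^ 2 * ⟪x₂, x₂⟫_ℂ +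
          ⟪x₁ + k • x₂, x₁ + k • x₂⟫_ℂ).re := by
  intro x₁ x₂
  obtain ⟨hk0, hkβ⟩ := hk
  have hd := hD₁ x₂
  have hcs : -(‖x₁‖ * ‖x₂‖) ≤ (⟪x₁, x₂⟫_ℂ).re := by
    have h1 : |(⟪x₁, x₂⟫_ℂ).re| ≤ ‖⟪x₁, x₂⟫_ℂ‖ := Complex.abs_re_le_norm _
    have h2 := norm_inner_le_norm (𝕜 := ℂ) x₁ x₂
    have h3 := neg_abs_le (⟪x₁, x₂⟫_ℂ).re
    linarith
  have hn : ‖x₁ + k • x₂‖ ^ 2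
      = ‖x₁‖ ^ 2 + 2 * (k * (⟪x₁, x₂⟫_ℂ).re) + k ^ 2 * ‖x₂‖ ^ 2 := by
    rw [norm_add_sq (𝕜 := ℂ), RCLike.real_smul_eq_coe_smul (K := ℂ), inner_smul_right,
      norm_smul]
    simp [mul_pow]
  have hre : (⟪x₂, x₂⟫_ℂ + (k : ℂ) * ⟪x₂, D₁ x₂⟫_ℂ - (k : ℂ) ^ 2 * ⟪x₂, x₂⟫_ℂ +
      ⟪x₁ + k • x₂, x₁ + k • x₂⟫_ℂ).re
      = ‖x₂‖ ^ 2 + k * (⟪x₂, D₁ x₂⟫_ℂ).re - k ^ 2 * ‖x₂‖ ^ 2 + ‖x₁ + k • x₂‖ ^ 2 := by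
    have e1 : (⟪x₂, x₂⟫_ℂ).re = ‖x₂‖ ^ 2 := by
      exact inner_self_eq_norm_sq (𝕜 := ℂ) x₂
    have e2 : (⟪x₁ + k • x₂, x₁ + k • x₂⟫_ℂ).re = ‖x₁ + k • x₂‖ ^ 2 :=
      inner_self_eq_norm_sq (𝕜 := ℂ) _
    simp [Complex.add_re, Complex.sub_re, Complex.mul_re, ← Complex.ofReal_pow, e1, e2]
  rw [hre, hn]
  have key : -(k * ‖x₁‖ ^ 2) / β ≤ k * (⟪x₂, D₁ x₂⟫_ℂ).re + 2 * (k * (⟪x₁, x₂⟫_ℂ).re) := by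
    rw [div_le_iff₀ hβ]
    nlinarith [mul_nonneg hk0.le (sq_nonneg (β * ‖x₂‖ - ‖x₁‖)),
      mul_le_mul_of_nonneg_left hd (mul_pos hk0 hβ).le,
      mul_le_mul_of_nonneg_left hcs (mul_pos hk0 hβ).le]
  have heq : (1 - k / β) * ‖x₁‖ ^ 2 = ‖x₁‖ ^ 2 + -(k * ‖x₁‖ ^ 2) / β := by ring
  rw [heq]
  linarith [key]
end

section
/- Let D, A be bounded operators on a complex Hilbert space H, write A = T + iS̃ and D = D₁ + iD₂ with T, S̃, D₁, D₂ self-adjoint (real and imaginary parts). Let 𝒜(x₁,x₂) = (−Dx₁ − Ax₂, x₁) and for k > 0 define the form [x,y] = ⟨Tx₂, y₂⟩ + k⟨D₁x₂, y₂⟩ − k²⟨x₂, y₂⟩ + ⟨x₁ + kx₂, y₁ + ky₂⟩ on H × H. Then for all x = (x₁,x₂): −(1/k)·Re[𝒜x, x] = (1/k)⟨D₁x₁, x₁⟩ − ‖x₁‖² + ⟨Tx₂, x₂⟩ + Im⟨((1/k)S̃ − D₂)x₁, x₂⟩. -/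
/-!
Expanding the form, the `k²⟨x₁, x₂⟩` terms cancel. Of what remains, `A = T + iS̃` and
`D = D₁ + iD₂` turn the real parts of the cross terms into imaginary parts, and self-adjointness
makes `⟨Tx₁, x₂⟩ - ⟨Tx₂, x₁⟩` imaginary and `⟨S̃x₂, x₂⟩`, `⟨D₂x₁, x₁⟩` real; dividing by `-k`
gives the identity.
-/

open scoped InnerProductSpace

namespace IsSelfAdjoint

variable {𝕜 E : Type*} [RCLike 𝕜] [NormedAddCommGroup E] [InnerProductSpace 𝕜 E] [CompleteSpace E]
  {T : E →L[𝕜] E}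

theorem inner_apply_eq_conj (hT : IsSelfAdjoint T) (x y : E) :
    ⟪x, T y⟫_𝕜 = starRingEnd 𝕜 ⟪y, T x⟫_𝕜 := by
  rw [← T.adjoint_inner_left, hT.adjoint_eq, inner_conj_symm]

theorem re_inner_apply_comm (hT : IsSelfAdjoint T) (x y : E) :
    RCLike.re ⟪x, T y⟫_𝕜 = RCLike.re ⟪y, T x⟫_𝕜 := by
  rw [hT.inner_apply_eq_conj, RCLike.conj_re]

theorem im_inner_apply_comm (hT : IsSelfAdjoint T) (x y : E) :
    RCLike.im ⟪x, T y⟫_𝕜 = -RCLike.im ⟪y, T x⟫_𝕜 := by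
  rw [hT.inner_apply_eq_conj, RCLike.conj_im]

theorem im_inner_self_apply (hT : IsSelfAdjoint T) (x : E) : RCLike.im ⟪x, T x⟫_𝕜 = 0 := by
  linarith [hT.im_inner_apply_comm x x]

end IsSelfAdjoint

section Companion

variable {H : Type*} [SeminormedAddCommGroup H] [InnerProductSpace ℂ H]

theorem ContinuousLinearMap.re_inner_add_I_smul_apply (T S : H →L[ℂ] H) (x y : H) :
    (⟪x, (T + Complex.I • S) y⟫_ℂ).re = (⟪x, T y⟫_ℂ).re - (⟪x, S y⟫_ℂ).im := by
  simp [inner_add_right, inner_smul_right, sub_eq_add_neg]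

theorem companion_form_expand (T D₁ A D : H →L[ℂ] H) (k : ℝ) (x₁ x₂ : H) :
    ⟪x₂, T x₁⟫_ℂ + (k : ℂ) * ⟪x₂, D₁ x₁⟫_ℂ - (k : ℂ) ^ 2 * ⟪x₂, x₁⟫_ℂ +
        ⟪x₁ + k • x₂, (-D x₁ - A x₂) + k • x₁⟫_ℂ =
      ⟪x₂, T x₁⟫_ℂ - ⟪x₁, A x₂⟫_ℂ - ⟪x₁, D x₁⟫_ℂ +
        k * (⟪x₂, D₁ x₁⟫_ℂ - ⟪x₂, D x₁⟫_ℂ - ⟪x₂, A x₂⟫_ℂ + ⟪x₁, x₁⟫_ℂ) := by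
  simp only [← Complex.coe_smul, inner_add_left, inner_add_right, inner_sub_right,
    inner_neg_right, inner_smul_left, inner_smul_right, Complex.conj_ofReal]
  ring

end Companion

/-- The paper's inner product `⟨u, v⟩` is written `⟪v, u⟫_ℂ`, linear in `u`. -/
theorem companion_form_identity_general {H : Type*} [NormedAddCommGroup H]
    [InnerProductSpace ℂ H] [CompleteSpace H]
    (T S D₁ D₂ A D : H →L[ℂ] H)
    (hT : IsSelfAdjoint T) (hS : IsSelfAdjoint S)
    (hD₂ : IsSelfAdjoint D₂)
    (hA : A = T + Complex.I • S) (hD : D = D₁ + Complex.I • D₂)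
    (k : ℝ) (hk : 0 < k) :
    ∀ x₁ x₂ : H,
      -(1 / k) *
        ((⟪x₂, T x₁⟫_ℂ + (k : ℂ) * ⟪x₂, D₁ x₁⟫_ℂ - (k : ℂ) ^ 2 * ⟪x₂, x₁⟫_ℂ +
          ⟪x₁ + k • x₂, (-D x₁ - A x₂) + k • x₁⟫_ℂ).re) =
      (1 / k) * (⟪x₁, D₁ x₁⟫_ℂ).re - ‖x₁‖ ^ 2 + (⟪x₂, T x₂⟫_ℂ).re +
        (⟪x₂, ((1 / k : ℂ) • S - D₂) x₁⟫_ℂ).im := by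
  intro x₁ x₂
  have hT₁₂ : (⟪x₁, T x₂⟫_ℂ).re = (⟪x₂, T x₁⟫_ℂ).re := hT.re_inner_apply_comm x₁ x₂
  have hS₁₂ : (⟪x₁, S x₂⟫_ℂ).im = -(⟪x₂, S x₁⟫_ℂ).im := hS.im_inner_apply_comm x₁ x₂
  have hS₂₂ : (⟪x₂, S x₂⟫_ℂ).im = 0 := hS.im_inner_self_apply x₂
  have hD₂₁₁ : (⟪x₁, D₂ x₁⟫_ℂ).im = 0 := hD₂.im_inner_self_apply x₁
  have hx₁ : (⟪x₁, x₁⟫_ℂ).re = ‖x₁‖ ^ 2 := inner_self_eq_norm_sq (𝕜 := ℂ) x₁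
  have hinv : (1 / k : ℂ) = ((1 / k : ℝ) : ℂ) := by push_cast; rfl
  rw [companion_form_expand, hA, hD, hinv]
  simp only [Complex.add_re, Complex.sub_re, Complex.re_ofReal_mul,
    ContinuousLinearMap.re_inner_add_I_smul_apply, sub_apply, smul_apply,
    inner_sub_right, inner_smul_right, Complex.sub_im,
    Complex.im_ofReal_mul, hT₁₂, hS₁₂, hS₂₂, hD₂₁₁, hx₁]
  field_simp [hk.ne']
  ring

/-- the key algebraic identity
`-(1/k)·Re[𝒜x, x] = (1/k)⟨D₁x₁,x₁⟩ - ‖x₁‖² + ⟨Tx₂,x₂⟩ + Im⟨((1/k)S̃ - D₂)x₁, x₂⟩`,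
where `[u,v] = ⟨Tu₂,v₂⟩ + k⟨D₁u₂,v₂⟩ - k²⟨u₂,v₂⟩ + ⟨u₁+ku₂, v₁+kv₂⟩` and
`𝒜(x₁,x₂) = (-Dx₁ - Ax₂, x₁)`.  (Inner products are written in the mathematical
convention `⟨u,v⟩ = ⟪v, u⟫_ℂ`, linear in the first argument.) -/
theorem companion_form_identity {H : Type*} [NormedAddCommGroup H]
    [InnerProductSpace ℂ H] [CompleteSpace H]
    (T S D₁ D₂ A D : H →L[ℂ] H)
    (hT : IsSelfAdjoint T) (hS : IsSelfAdjoint S)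
    (hD₁ : IsSelfAdjoint D₁) (hD₂ : IsSelfAdjoint D₂)
    (hA : A = T + Complex.I • S) (hD : D = D₁ + Complex.I • D₂)
    (k : ℝ) (hk : 0 < k) :
    ∀ x₁ x₂ : H,
      -(1 / k) *
        ((⟪x₂, T x₁⟫_ℂ + (k : ℂ) * ⟪x₂, D₁ x₁⟫_ℂ - (k : ℂ) ^ 2 * ⟪x₂, x₁⟫_ℂ +
          ⟪x₁ + k • x₂, (-D x₁ - A x₂) + k • x₁⟫_ℂ).re) =
      (1 / k) * (⟪x₁, D₁ x₁⟫_ℂ).re - ‖x₁‖ ^ 2 + (⟪x₂, T x₂⟫_ℂ).re +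
        (⟪x₂, ((1 / k : ℂ) • S - D₂) x₁⟫_ℂ).im :=
  companion_form_identity_general T S D₁ D₂ A D hT hS hD₂ hA hD k hk
end

section
/- Let D, A be bounded operators on a complex Hilbert space with real parts D₁, T satisfying ⟨D₁x,x⟩ ≥ δ⟨Tx,x⟩ and ⟨Tx,x⟩ ≥ a₀‖x‖² for all x, with δ, a₀ > 0, and imaginary parts D₂, S̃. Let k > 0 and p, q > 0 with p + q ≤ 1, and suppose ω₁' = a₀(δ/k − ‖S̃‖²/(4pk²a₀²) − ‖D₂‖²/(4q·a₀²)·a₀) satisfies the bound (1/k)⟨D₁x,x⟩ − (1/(4pk²))‖S̃x‖²/a₀ − (1/(4q))‖D₂x‖²/a₀ ≥ ω₁'‖x‖² for all x. Then for the companion operator 𝒜 and the form [·,·] as above, −(1/k)Re[𝒜x,x] ≥ (ω₁'−1)‖x₁‖² + (1−p−q)⟨Tx₂,x₂⟩ for all x = (x₁,x₂). -/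
open scoped InnerProductSpace

/-!
Expanding the form, self-adjointness of `T`, `S̃`, `D₂` leaves
`Re[𝒜x,x] = k‖x₁‖² - ⟨D₁x₁,x₁⟩ - k⟨Tx₂,x₂⟩ + Im⟨S̃x₂,x₁⟩ + k Im⟨D₂x₁,x₂⟩`.
After multiplying by `-1/k`, Cauchy–Schwarz and Peter–Paul, combined with coercivity
`a₀‖x₂‖² ≤ ⟨Tx₂,x₂⟩`, bound the two cross terms by `‖S̃x₁‖²/(4pk²a₀) + p⟨Tx₂,x₂⟩` and
`‖D₂x₁‖²/(4qa₀) + q⟨Tx₂,x₂⟩`; what remains in `x₁` is exactly the quantity bounded below by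
`ω₁'‖x₁‖²`.
-/

section

variable {H : Type*} [NormedAddCommGroup H] [InnerProductSpace ℂ H]

theorem im_inner_le_norm (x y : H) : (⟪x, y⟫_ℂ).im ≤ ‖x‖ * ‖y‖ :=
  (Complex.im_le_norm _).trans (norm_inner_le_norm _ _)

theorem re_companion_form_eq {T S D₁ D₂ : H →L[ℂ] H}
    (hT : (T : H →ₗ[ℂ] H).IsSymmetric) (hS : (S : H →ₗ[ℂ] H).IsSymmetric)
    (hD₂ : (D₂ : H →ₗ[ℂ] H).IsSymmetric) (k : ℝ) (x₁ x₂ : H) :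
    ((⟪x₂, T x₁⟫_ℂ + (k : ℂ) * ⟪x₂, D₁ x₁⟫_ℂ - (k : ℂ) ^ 2 * ⟪x₂, x₁⟫_ℂ +
      ⟪x₁ + k • x₂, (-(D₁ + Complex.I • D₂) x₁ - (T + Complex.I • S) x₂) + k • x₁⟫_ℂ).re)
    = k * ‖x₁‖ ^ 2 - (⟪x₁, D₁ x₁⟫_ℂ).re - k * (⟪x₂, T x₂⟫_ℂ).re
      + (⟪x₁, S x₂⟫_ℂ).im + k * (⟪x₂, D₂ x₁⟫_ℂ).im := by
  have hT₁₂ : ⟪x₂, T x₁⟫_ℂ = starRingEnd ℂ ⟪x₁, T x₂⟫_ℂ := by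
    rw [inner_conj_symm, hT.apply_clm]
  have hS₂ : (⟪x₂, S x₂⟫_ℂ).im = 0 := hS.im_inner_self_apply x₂
  have hD₂₁ : (⟪x₁, D₂ x₁⟫_ℂ).im = 0 := hD₂.im_inner_self_apply x₁
  have hx₁ : (⟪x₁, x₁⟫_ℂ).re = ‖x₁‖ ^ 2 := by simpa using inner_self_eq_norm_sq (𝕜 := ℂ) x₁
  simp only [← Complex.coe_smul, add_apply, smul_apply, inner_add_left, inner_add_right,
    inner_sub_right, inner_neg_right, inner_smul_left, inner_smul_right, hT₁₂]
  simp only [Complex.add_re, Complex.add_im, Complex.sub_re, Complex.neg_re, Complex.mul_re,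
    Complex.mul_im, Complex.conj_ofReal, Complex.conj_re, Complex.I_re, Complex.I_im,
    Complex.ofReal_re, Complex.ofReal_im, ← Complex.ofReal_pow, hS₂, hD₂₁, hx₁]
  ring

end

theorem mul_le_sq_div_add_of_mul_sq_le {a b c t ε : ℝ} (hε : 0 < ε) (ha : 0 < a)
    (hb : a * b ^ 2 ≤ t) : c * b ≤ c ^ 2 / (4 * ε * a) + ε * t := by
  have peter_paul : c * b ≤ c ^ 2 / (4 * ε * a) + ε * (a * b ^ 2) := by
    have key : c ^ 2 / (4 * ε * a) + ε * (a * b ^ 2) - c * b =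
        (c - 2 * ε * a * b) ^ 2 / (4 * ε * a) := by
      field_simp
      ring
    rw [← sub_nonneg, key]
    positivity
  exact peter_paul.trans (by gcongr)

theorem companion_form_lower_estimate_strong_damping_general {H : Type*} [NormedAddCommGroup H]
    [InnerProductSpace ℂ H] [CompleteSpace H]
    (T S D₁ D₂ A D : H →L[ℂ] H)
    (hT : IsSelfAdjoint T) (hS : IsSelfAdjoint S)
    (hD₂sa : IsSelfAdjoint D₂)
    (hA : A = T + Complex.I • S) (hD : D = D₁ + Complex.I • D₂)
    (a₀ : ℝ) (ha₀ : 0 < a₀)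
    (hTcoerc : ∀ x : H, a₀ * ‖x‖ ^ 2 ≤ (⟪x, T x⟫_ℂ).re)
    (k : ℝ) (hk : 0 < k)
    (p q : ℝ) (hp : 0 < p) (hq : 0 < q)
    (ω₁' : ℝ)
    (hω₁' : ∀ x : H,
      ω₁' * ‖x‖ ^ 2 ≤
        (1 / k) * (⟪x, D₁ x⟫_ℂ).re - (1 / (4 * p * k ^ 2)) * ‖S x‖ ^ 2 / a₀ -
          (1 / (4 * q)) * ‖D₂ x‖ ^ 2 / a₀) :
    ∀ x₁ x₂ : H,
      (ω₁' - 1) * ‖x₁‖ ^ 2 + (1 - p - q) * (⟪x₂, T x₂⟫_ℂ).re ≤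
        -(1 / k) *
          ((⟪x₂, T x₁⟫_ℂ + (k : ℂ) * ⟪x₂, D₁ x₁⟫_ℂ - (k : ℂ) ^ 2 * ⟪x₂, x₁⟫_ℂ +
            ⟪x₁ + k • x₂, (-D x₁ - A x₂) + k • x₁⟫_ℂ).re) := by
  intro x₁ x₂
  subst hA hD
  rw [re_companion_form_eq hT.isSymmetric hS.isSymmetric hD₂sa.isSymmetric]
  have hx₂ := hTcoerc x₂
  have hS_cross : 1 / k * (⟪x₁, S x₂⟫_ℂ).im ≤
      1 / (4 * p * k ^ 2) * ‖S x₁‖ ^ 2 / a₀ + p * (⟪x₂, T x₂⟫_ℂ).re :=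
    calc 1 / k * (⟪x₁, S x₂⟫_ℂ).im ≤ ‖S x₁‖ / k * ‖x₂‖ := by
          rw [← hS.isSymmetric.apply_clm, one_div_mul_eq_div, div_mul_eq_mul_div]
          gcongr
          exact im_inner_le_norm _ _
      _ ≤ (‖S x₁‖ / k) ^ 2 / (4 * p * a₀) + p * (⟪x₂, T x₂⟫_ℂ).re :=
          mul_le_sq_div_add_of_mul_sq_le hp ha₀ hx₂
      _ = _ := by ring
  have hD_cross : (⟪x₂, D₂ x₁⟫_ℂ).im ≤
      1 / (4 * q) * ‖D₂ x₁‖ ^ 2 / a₀ + q * (⟪x₂, T x₂⟫_ℂ).re :=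
    calc (⟪x₂, D₂ x₁⟫_ℂ).im ≤ ‖D₂ x₁‖ * ‖x₂‖ :=
          (im_inner_le_norm _ _).trans_eq (mul_comm _ _)
      _ ≤ ‖D₂ x₁‖ ^ 2 / (4 * q * a₀) + q * (⟪x₂, T x₂⟫_ℂ).re :=
          mul_le_sq_div_add_of_mul_sq_le hq ha₀ hx₂
      _ = _ := by ring
  have hk_inv : 1 / k * k = 1 := one_div_mul_cancel hk.ne'
  linear_combination hω₁' x₁ + hS_cross + hD_cross +
    (‖x₁‖ ^ 2 - (⟪x₂, T x₂⟫_ℂ).re + (⟪x₂, D₂ x₁⟫_ℂ).im) * hk_inv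

/-- under the strong damping assumption `⟨D₁x,x⟩ ≥ δ⟨Tx,x⟩`, if `ω₁'`
satisfies `(1/k)⟨D₁x,x⟩ - (1/(4pk²))‖S̃x‖²/a₀ - (1/(4q))‖D₂x‖²/a₀ ≥ ω₁'‖x‖²`, then
`-(1/k)Re[𝒜x,x] ≥ (ω₁'-1)‖x₁‖² + (1-p-q)⟨Tx₂,x₂⟩`.
(Inner products in the mathematical convention `⟨u,v⟩ = ⟪v, u⟫_ℂ`.) -/
theorem companion_form_lower_estimate_strong_damping {H : Type*} [NormedAddCommGroup H]
    [InnerProductSpace ℂ H] [CompleteSpace H]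
    (T S D₁ D₂ A D : H →L[ℂ] H)
    (hT : IsSelfAdjoint T) (hS : IsSelfAdjoint S)
    (hD₁sa : IsSelfAdjoint D₁) (hD₂sa : IsSelfAdjoint D₂)
    (hA : A = T + Complex.I • S) (hD : D = D₁ + Complex.I • D₂)
    (a₀ δ : ℝ) (ha₀ : 0 < a₀) (hδ : 0 < δ)
    (hTcoerc : ∀ x : H, a₀ * ‖x‖ ^ 2 ≤ (⟪x, T x⟫_ℂ).re)
    (hdamp : ∀ x : H, δ * (⟪x, T x⟫_ℂ).re ≤ (⟪x, D₁ x⟫_ℂ).re)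
    (k : ℝ) (hk : 0 < k)
    (p q : ℝ) (hp : 0 < p) (hq : 0 < q) (hpq : p + q ≤ 1)
    (ω₁' : ℝ)
    (hω₁' : ∀ x : H,
      ω₁' * ‖x‖ ^ 2 ≤
        (1 / k) * (⟪x, D₁ x⟫_ℂ).re - (1 / (4 * p * k ^ 2)) * ‖S x‖ ^ 2 / a₀ -
          (1 / (4 * q)) * ‖D₂ x‖ ^ 2 / a₀) :
    ∀ x₁ x₂ : H,
      (ω₁' - 1) * ‖x₁‖ ^ 2 + (1 - p - q) * (⟪x₂, T x₂⟫_ℂ).re ≤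
        -(1 / k) *
          ((⟪x₂, T x₁⟫_ℂ + (k : ℂ) * ⟪x₂, D₁ x₁⟫_ℂ - (k : ℂ) ^ 2 * ⟪x₂, x₁⟫_ℂ +
            ⟪x₁ + k • x₂, (-D x₁ - A x₂) + k • x₁⟫_ℂ).re) :=
  companion_form_lower_estimate_strong_damping_general T S D₁ D₂ A D hT hS hD₂sa hA hD a₀ ha₀
    hTcoerc k hk p q hp hq ω₁' hω₁'
end
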